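/- Forward-inaccessible steps under full search information: in the baseline sequential search process where products 1..J are inspected in order and product h ≤ J is purchased (the purchase is the final step, terminating the process), call a step forward-inaccessible if no unselected alternative in its choice set is selected later. Then: if h < J, the only forward-inaccessible step is the final purchase step; if h = J, exactly the last inspection step (step J) and the purchase step are forward-inaccessible. Consequently the core value, defined as the minimum value over actions selected at forward-inaccessible steps, equals u_h when h < J and min(u_h, z_J) when h = J; combined with the Optimal Continuing constraint u_h ≤ z_J when h < J, in both cases the core value equals min(u_h, z_J). -/
import Mathlib


/-- An action in the baseline search model with products indexed `1, …, M`. -/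
inductive SAct where
  | inspect (j : ℕ)
  | purchase (j : ℕ)
deriving DecidableEq

namespace SAct

/-- Value (Gittins index) of an action: reservation value for inspections,
purchase value for purchases. -/
def val (z u : ℕ → ℝ) : SAct → ℝ
  | inspect j => z j
  | purchase j => u j

/-- Availability given the list `prev` of previously selected actions in a
market of `M` products. -/
def available (M : ℕ) (prev : List SAct) : SAct → Prop
  | inspect j => 1 ≤ j ∧ j ≤ M ∧ inspect j ∉ prev
  | purchase j => inspect j ∈ prev ∧ purchase j ∉ prev

end SAct

open SAct in
/-- **Forward-inaccessible steps and the core value under full search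
information.**  The realized sequence is `I₁, …, I_J, P_h` (inspect products
`1, …, J` in order, then purchase `h ≤ J`).  A step `t` (0-based, `t ≤ J`) is
forward-inaccessible — no unselected available alternative at `t` is selected
later — iff: when `h < J`, `t = J` (the purchase step only); when `h = J`,
`t = J − 1` or `t = J`.  Consequently (using `u h ≤ z J` when `h < J`, from
Optimal Continuing), the minimum value over actions selected at
forward-inaccessible steps — the core value — equals `min (u h) (z J)` in both
cases. -/
theorem core_value_full_information
    (M J h : ℕ) (hJ1 : 1 ≤ J) (hJM : J ≤ M) (hh1 : 1 ≤ h) (hhJ : h ≤ J)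
    (z u : ℕ → ℝ) (hcont : h < J → u h ≤ z J)
    (seq : List SAct)
    (hseq : seq = (List.range J).map (fun j => SAct.inspect (j + 1)) ++
      [SAct.purchase h])
    (sel : ℕ → SAct) (hsel : sel = fun t => seq.getD t (SAct.purchase 0))
    (FI : ℕ → Prop)
    (hFI : FI = fun t => ∀ a : SAct, available M (seq.take t) a → a ≠ sel t →
      ∀ t', t < t' → t' < seq.length → sel t' ≠ a) :
    (∀ t, t < J + 1 →
      (FI t ↔ (if h < J then t = J else (t = J - 1 ∨ t = J)))) ∧
    IsLeast {x : ℝ | ∃ t, t < J + 1 ∧ FI t ∧ x = val z u (sel t)}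
      (min (u h) (z J)) := by
  subst hseq hsel
  have hlen : (((List.range J).map (fun j => SAct.inspect (j + 1))) ++
      [SAct.purchase h]).length = J + 1 := by simp
  have hget : ∀ t, t < J →
      ((((List.range J).map (fun j => SAct.inspect (j + 1))) ++
        [SAct.purchase h]).getD t (SAct.purchase 0)) = SAct.inspect (t + 1) := by
    intro t ht
    rw [List.getD_eq_getElem _ _ (by simp; omega)]
    rw [List.getElem_append_left (by simpa using ht)]
    simp
  have hgetJ : ((((List.range J).map (fun j => SAct.inspect (j + 1))) ++
        [SAct.purchase h]).getD J (SAct.purchase 0)) = SAct.purchase h := by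
    rw [List.getD_eq_getElem _ _ (by simp)]
    rw [List.getElem_append_right (by simp)]
    simp
  have htake : ∀ t, t ≤ J →
      ((((List.range J).map (fun j => SAct.inspect (j + 1))) ++
        [SAct.purchase h]).take t) = (List.range t).map (fun j => SAct.inspect (j + 1)) := by
    intro t ht
    rw [List.take_append_of_le_length (by simpa using ht), ← List.map_take,
      List.take_range, min_eq_left ht]
  have hmemi : ∀ t j, SAct.inspect j ∈ (List.range t).map
      (fun k => SAct.inspect (k + 1)) ↔ 1 ≤ j ∧ j ≤ t := by
    intro t j
    constructor
    · intro hm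
      obtain ⟨k, hk, he⟩ := List.mem_map.mp hm
      simp only [SAct.inspect.injEq] at he
      simp only [List.mem_range] at hk
      omega
    · rintro ⟨h1, h2⟩
      exact List.mem_map.mpr ⟨j - 1, by simp only [List.mem_range]; omega,
        by simp only [SAct.inspect.injEq]; omega⟩
  have hFI' : ∀ t, t < J + 1 →
      (FI t ↔ if h < J then t = J else (t = J - 1 ∨ t = J)) := by
    intro t ht
    rw [hFI]
    simp only []
    rcases Nat.lt_or_ge t J with htJ | htJ
    · constructor
      · intro hfi
        by_cases ht1 : t + 1 < J
        · exfalso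
          refine hfi (SAct.inspect (t + 2)) ?_ ?_ (t + 1) (by omega)
            (by rw [hlen]; omega) ?_
          · show 1 ≤ t + 2 ∧ t + 2 ≤ M ∧ _
            refine ⟨by omega, by omega, ?_⟩
            rw [htake t (by omega), hmemi]
            omega
          · rw [hget t htJ]
            simp only [ne_eq, SAct.inspect.injEq]
            omega
          · rw [hget (t + 1) ht1]
        · have htJ1 : t + 1 = J := by omega
          by_cases hhJ' : h < J
          · exfalso
            refine hfi (SAct.purchase h) ?_ ?_ J (by omega)
              (by rw [hlen]; omega) ?_
            · refine ⟨?_, ?_⟩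
              · rw [htake t (by omega), hmemi]
                omega
              · rw [htake t (by omega)]
                simp
            · rw [hget t htJ]
              simp
            · rw [hgetJ]
          · simp only [hhJ', if_false]
            omega
      · intro hR
        have hhJ' : h = J ∧ t + 1 = J := by
          rcases Nat.lt_or_ge h J with h1 | h1
          · simp only [h1, if_true] at hR; omega
          · have : ¬ h < J := by omega
            simp only [this, if_false] at hR
            omega
        obtain ⟨hEqh, ht1⟩ := hhJ'
        intro a ha hne t' ht' ht''
        rw [hlen] at ht''
        have ht'J : t' = J := by omega
        subst ht'J
        simp only [hgetJ]
        intro hEq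
        subst hEq
        obtain ⟨hmem, -⟩ := ha
        rw [htake t (by omega), hmemi] at hmem
        omega
    · have htJ' : t = J := by omega
      subst htJ'
      constructor
      · intro _
        split
        · rfl
        · right; rfl
      · intro _ a ha hne t' ht' ht''
        rw [hlen] at ht''
        omega
  constructor
  · exact hFI'
  · constructor
    · rcases Nat.lt_or_ge h J with hlt | hge
      · refine ⟨J, by omega, (hFI' J (by omega)).mpr (by simp [hlt]), ?_⟩
        simp only [hgetJ, SAct.val]
        exact min_eq_left (hcont hlt)
      · have hEq : h = J := by omega
        rcases min_cases (u h) (z J) with ⟨hm, hle⟩ | ⟨hm, hle⟩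
        · refine ⟨J, by omega, (hFI' J (by omega)).mpr (by simp), ?_⟩
          simp only [hgetJ, SAct.val]
          exact hm.symm ▸ rfl
        · refine ⟨J - 1, by omega, (hFI' (J - 1) (by omega)).mpr
            (by split <;> omega), ?_⟩
          simp only [hget (J - 1) (by omega), SAct.val]
          have hJ' : J - 1 + 1 = J := by omega
          rw [hJ', hm]
    · rintro x ⟨t, ht, hfi, rfl⟩
      have hthis := (hFI' t ht).mp hfi
      rcases Nat.lt_or_ge h J with hlt | hge
      · simp only [hlt, if_true] at hthis
        subst hthis
        simp only [hgetJ, SAct.val]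
        exact min_le_left _ _
      · have h' : ¬ h < J := by omega
        simp only [h', if_false] at hthis
        rcases hthis with h1 | h1
        · subst h1
          simp only [hget (J - 1) (by omega), SAct.val]
          have hJ' : J - 1 + 1 = J := by omega
          rw [hJ']
          exact min_le_right _ _
        · subst h1
          simp only [hgetJ, SAct.val]
          exact min_le_left _ _
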